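/- Assume D is compact with O ∉ D and D is contained in a plane or D is countable. Let σ ∈ A(δ), and let S = {x ∈ Ω̄ : there exist P₁ ≠ P₂ in D with x ∈ τ_σ(P₁) ∩ τ_σ(P₂)}. Suppose x_n, x₀ ∈ Ω̄ \ S with x_n → x₀, and let E_{d_n}(P_n) and E_{d₀}(P₀) be supporting ellipsoids to σ at ρ(x_n)x_n and ρ(x₀)x₀ respectively, with corresponding outer unit normals ν(x_n) = (x_n − ε_n m_n)/|x_n − ε_n m_n| and ν(x₀) = (x₀ − ε₀ m₀)/|x₀ − ε₀ m₀|. Then d_n → d₀, P_n → P₀, and ν(x_n) → ν(x₀) as n → ∞. -/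

import Mathlib

/-!
A support at a direction `x₀ ∉ S` is unique: its target point by the definition of `S`, and its
parameter `d` because the confocal ellipsoids `E_d(P)` are strictly nested in `d`. The parameters
`(P_n, d_n)` stay in the compact set `D × [0, 2 d₀ / (1 - ε₀)]`, so it suffices that every cluster
point `(P', d')` is `(P₀, d₀)`. If `d' > 0`, the support inequalities pass to the limit and
`E_{d'}(P')` supports `σ` at `x₀`. If `d' = 0`, the ellipsoids collapse onto the ray through `P'`,
which forces `Ω̄` to be the single direction `x₀`, where every support is `E_{d₀}(P₀)`. The normals
then converge by continuity.
-/

noncomputable section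

open MeasureTheory Metric Set Filter Topology
attribute [local instance] Classical.propDecidable

/-- Real inner product on `ℝ³`. -/
noncomputable def rinner (x y : EuclideanSpace ℝ (Fin 3)) : ℝ := inner ℝ x y

/-- Euclidean 3-space. -/
abbrev E3 : Type := EuclideanSpace ℝ (Fin 3)

/-- The unit sphere `S²` in `ℝ³`. -/
def sphere2 : Set E3 := Metric.sphere (0 : E3) 1

/-- Unit vector `m = P/OP` in the direction of `P`. -/
noncomputable def axisDir (P : E3) : E3 := ‖P‖⁻¹ • P

/-- Eccentricity `ε = √(1 + d²/OP²) − d/OP` of the ellipsoid `E_d(P)`. -/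
noncomputable def ecc (P : E3) (d : ℝ) : ℝ :=
  Real.sqrt (1 + d ^ 2 / ‖P‖ ^ 2) - d / ‖P‖

/-- Polar radius `ρ_d(x) = d/(1 − ε x·m)` of the ellipsoid `E_d(P)`. -/
noncomputable def polarRadius (P : E3) (d : ℝ) (x : E3) : ℝ :=
  d / (1 - ecc P d * rinner x (axisDir P))

/-- The constant `c_δ = √(1 + δ²) − δ`. -/
noncomputable def cconst (δ : ℝ) : ℝ := Real.sqrt (1 + δ ^ 2) - δ

/-- Outer unit normal `(x − εm)/|x − εm|` of the ellipsoid `E_d(P)` at the point `ρ_d(x)x`. -/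
noncomputable def normalVec (P : E3) (d : ℝ) (x : E3) : E3 :=
  ‖x - ecc P d • axisDir P‖⁻¹ • (x - ecc P d • axisDir P)

/-- The ellipsoid `E_d(P)` supports the surface `{ρ(x)x : x ∈ closure Ω}` at `ρ(x₀)x₀`. -/
def IsSupportingAt (Ω : Set E3) (ρ : E3 → ℝ) (P : E3) (d : ℝ) (x₀ : E3) : Prop :=
  P ≠ 0 ∧ 0 < d ∧ (∀ x ∈ closure Ω, ρ x ≤ polarRadius P d x) ∧
    ρ x₀ = polarRadius P d x₀

/-- `{ρ(x)x : x ∈ closure Ω}` is a reflector from `closure Ω` to the target `D`. -/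
def IsReflector (Ω D : Set E3) (ρ : E3 → ℝ) : Prop :=
  (∀ x ∈ closure Ω, 0 < ρ x) ∧
  ∀ x₀ ∈ closure Ω, ∃ P ∈ D, ∃ d : ℝ, IsSupportingAt Ω ρ P d x₀

/-- Tracing set `τ_σ(E)`: directions reflected into `E`. -/
def tracing (Ω : Set E3) (ρ : E3 → ℝ) (E : Set E3) : Set E3 :=
  {x | x ∈ closure Ω ∧ ∃ P ∈ E, ∃ d : ℝ, IsSupportingAt Ω ρ P d x}

/-- The class `A(δ)`: reflectors all of whose points admit a supporting ellipsoid with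
`d ≥ δ M`. -/
def InClassA (Ω D : Set E3) (ρ : E3 → ℝ) (δ M : ℝ) : Prop :=
  IsReflector Ω D ρ ∧
  ∀ x₀ ∈ closure Ω, ∃ P ∈ D, ∃ d : ℝ, δ * M ≤ d ∧ IsSupportingAt Ω ρ P d x₀

/-- The boundary `∂Ω` of `Ω` relative to the sphere `S²`. -/
def sphFrontier (Ω : Set E3) : Set E3 := closure Ω ∩ closure (sphere2 \ Ω)

/-- `D` is contained in a plane of `ℝ³`. -/
def InPlane (D : Set E3) : Prop :=
  ∃ v : E3, v ≠ 0 ∧ ∃ c : ℝ, ∀ P ∈ D, rinner P v = c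

/-- The set `S` of directions traced to two distinct target points. -/
def ambigSet (Ω D : Set E3) (ρ : E3 → ℝ) : Set E3 :=
  {x | x ∈ closure Ω ∧ ∃ P₁ ∈ D, ∃ P₂ ∈ D, P₁ ≠ P₂ ∧
    x ∈ tracing Ω ρ {P₁} ∧ x ∈ tracing Ω ρ {P₂}}

/-- A canonical selection of the outer unit normal `ν(x)` of the reflector; at every point
where the supporting ellipsoid is unique (a.e. point) this is the normal of the
supporting ellipsoid. -/
noncomputable def nuSel (Ω D : Set E3) (ρ : E3 → ℝ) (x : E3) : E3 :=
  if h : ∃ p : E3 × ℝ, p.1 ∈ D ∧ IsSupportingAt Ω ρ p.1 p.2 x then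
    normalVec h.choose.1 h.choose.2 x
  else 0

/-- A canonical selection of the reflector map `𝒩_σ(x)`; at every point with a unique
supporting ellipsoid (a.e. point) this is the target point the ray `x` is reflected to. -/
noncomputable def reflMapSel (Ω D : Set E3) (ρ : E3 → ℝ) (x : E3) : E3 :=
  if h : ∃ p : E3 × ℝ, p.1 ∈ D ∧ IsSupportingAt Ω ρ p.1 p.2 x then h.choose.1 else 0

/-- The reflector measure `μ(E) = ∫_{τ_σ(E)} f(x) (x·ν(x))/ρ(x)² dx`,
the irradiance received on `E ⊆ D`. -/
noncomputable def reflMeasure (Ω D : Set E3) (ρ f : E3 → ℝ) (E : Set E3) : ℝ :=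
  ∫ x in tracing Ω ρ E, f x * rinner x (nuSel Ω D ρ x) / ρ x ^ 2 ∂μH[2]


lemma cconst_pos (δ : ℝ) : 0 < cconst δ := by
  have h : δ < √(1 + δ ^ 2) := Real.lt_sqrt_of_sq_lt (by linarith)
  rw [cconst]
  linarith

lemma cconst_lt_one {δ : ℝ} (hδ : 0 < δ) : cconst δ < 1 := by
  have h : √(1 + δ ^ 2) < 1 + δ := (Real.sqrt_lt' (by linarith)).2 (by nlinarith)
  rw [cconst]
  linarith

lemma ecc_eq_cconst (P : E3) (d : ℝ) : ecc P d = cconst (d / ‖P‖) := by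
  rw [ecc, cconst, div_pow]

lemma ecc_pos (P : E3) (d : ℝ) : 0 < ecc P d :=
  ecc_eq_cconst P d ▸ cconst_pos _

lemma ecc_lt_one {P : E3} {d : ℝ} (hP : P ≠ 0) (hd : 0 < d) : ecc P d < 1 :=
  ecc_eq_cconst P d ▸ cconst_lt_one (div_pos hd (norm_pos_iff.2 hP))

lemma ecc_zero (P : E3) : ecc P 0 = 1 := by
  simp [ecc]

lemma norm_axisDir {P : E3} (hP : P ≠ 0) : ‖axisDir P‖ = 1 := by
  rw [axisDir, norm_smul, norm_inv, norm_norm, inv_mul_cancel₀ (norm_ne_zero_iff.2 hP)]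

lemma abs_rinner_axisDir_le_one {P x : E3} (hP : P ≠ 0) (hx : ‖x‖ = 1) :
    |rinner x (axisDir P)| ≤ 1 := by
  simpa [rinner, hx, norm_axisDir hP] using abs_real_inner_le_norm x (axisDir P)

lemma norm_eq_one_of_mem_closure {Ω : Set E3} (hΩ : Ω ⊆ sphere2) {x : E3}
    (hx : x ∈ closure Ω) : ‖x‖ = 1 :=
  mem_sphere_zero_iff_norm.1 (closure_minimal hΩ isClosed_sphere hx)

section polarRadius

variable {P x : E3} {d : ℝ}

lemma one_sub_ecc_le (hP : P ≠ 0) (hx : ‖x‖ = 1) :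
    1 - ecc P d ≤ 1 - ecc P d * rinner x (axisDir P) := by
  have hu := (abs_le.1 (abs_rinner_axisDir_le_one hP hx)).2
  nlinarith [ecc_pos P d]

lemma one_sub_ecc_mul_rinner_le_two (hP : P ≠ 0) (hd : 0 < d) (hx : ‖x‖ = 1) :
    1 - ecc P d * rinner x (axisDir P) ≤ 2 := by
  have hu := (abs_le.1 (abs_rinner_axisDir_le_one hP hx)).1
  nlinarith [ecc_pos P d, ecc_lt_one hP hd]

lemma one_sub_ecc_mul_rinner_pos (hP : P ≠ 0) (hd : 0 < d) (hx : ‖x‖ = 1) :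
    0 < 1 - ecc P d * rinner x (axisDir P) :=
  (sub_pos.2 (ecc_lt_one hP hd)).trans_le (one_sub_ecc_le hP hx)

lemma div_two_le_polarRadius (hP : P ≠ 0) (hd : 0 < d) (hx : ‖x‖ = 1) :
    d / 2 ≤ polarRadius P d x :=
  div_le_div_of_nonneg_left hd.le (one_sub_ecc_mul_rinner_pos hP hd hx)
    (one_sub_ecc_mul_rinner_le_two hP hd hx)

lemma polarRadius_le (hP : P ≠ 0) (hd : 0 < d) (hx : ‖x‖ = 1) :
    polarRadius P d x ≤ d / (1 - ecc P d) :=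
  div_le_div_of_nonneg_left hd.le (sub_pos.2 (ecc_lt_one hP hd)) (one_sub_ecc_le hP hx)

lemma sub_ecc_smul_axisDir_ne_zero (hP : P ≠ 0) (hd : 0 < d) (hx : ‖x‖ = 1) :
    x - ecc P d • axisDir P ≠ 0 := by
  rw [sub_ne_zero]
  rintro rfl
  rw [norm_smul, norm_axisDir hP, mul_one, Real.norm_of_nonneg (ecc_pos P d).le] at hx
  exact (ecc_lt_one hP hd).ne hx

end polarRadius

lemma strictMono_add_sub_mul_sqrt {u : ℝ} (hu : |u| ≤ 1) :
    StrictMono fun w : ℝ => w + u - u * √(1 + w ^ 2) := by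
  intro w₁ w₂ hw
  set a := √(1 + w₁ ^ 2)
  set b := √(1 + w₂ ^ 2)
  have ha : a ^ 2 = 1 + w₁ ^ 2 := Real.sq_sqrt (by positivity)
  have hb : b ^ 2 = 1 + w₂ ^ 2 := Real.sq_sqrt (by positivity)
  have ha₁ : |w₁| < a := (Real.lt_sqrt (abs_nonneg _)).2 (by rw [sq_abs]; linarith)
  have hb₂ : |w₂| < b := (Real.lt_sqrt (abs_nonneg _)).2 (by rw [sq_abs]; linarith)
  -- `√(1 + w²)` is a contraction: `|b - a| (a + b) = |w₂ - w₁| |w₂ + w₁|` with `|w₂ + w₁| < a + b`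
  have hba : |b - a| < w₂ - w₁ := by
    have hsum : |w₂ + w₁| < a + b := (abs_add_le _ _).trans_lt (by linarith)
    have hab : 0 < a + b := (abs_nonneg _).trans_lt hsum
    have hprod : |b - a| * (a + b) = (w₂ - w₁) * |w₂ + w₁| := by
      rw [← abs_of_pos (sub_pos.2 hw), ← abs_mul, ← abs_of_pos hab, ← abs_mul]
      congr 1
      linear_combination hb - ha
    nlinarith [abs_nonneg (w₂ + w₁), abs_nonneg (b - a)]
  have : u * (b - a) < w₂ - w₁ :=
    (le_abs_self _).trans_lt (by rw [abs_mul]; nlinarith [abs_nonneg (b - a), abs_nonneg u])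
  simp only
  linarith

/-- The confocal ellipsoids are nested: in the variable `w = OP / d`, `OP / ρ_d` is the strictly
monotone function of `strictMono_add_sub_mul_sqrt`. -/
lemma norm_div_polarRadius {P : E3} {d : ℝ} (hP : P ≠ 0) (hd : 0 < d) (x : E3) :
    ‖P‖ / polarRadius P d x = ‖P‖ / d + rinner x (axisDir P) -
      rinner x (axisDir P) * √(1 + (‖P‖ / d) ^ 2) := by
  have hr : 0 < ‖P‖ := norm_pos_iff.2 hP
  have hsqrt : √(1 + (‖P‖ / d) ^ 2) = ‖P‖ / d * √(1 + d ^ 2 / ‖P‖ ^ 2) := by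
    calc √(1 + (‖P‖ / d) ^ 2) = √((‖P‖ / d) ^ 2 * (1 + d ^ 2 / ‖P‖ ^ 2)) := by
          congr 1
          field_simp
          ring
      _ = ‖P‖ / d * √(1 + d ^ 2 / ‖P‖ ^ 2) := by
          rw [Real.sqrt_mul (sq_nonneg _), Real.sqrt_sq (div_pos hr hd).le]
  rw [hsqrt, polarRadius, ecc, div_div_eq_mul_div]
  field_simp
  ring

lemma eq_of_polarRadius_eq {P x : E3} {d₁ d₂ : ℝ} (hP : P ≠ 0) (hd₁ : 0 < d₁) (hd₂ : 0 < d₂)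
    (hx : ‖x‖ = 1) (h : polarRadius P d₁ x = polarRadius P d₂ x) : d₁ = d₂ := by
  have hw : ‖P‖ / d₁ = ‖P‖ / d₂ := by
    refine (strictMono_add_sub_mul_sqrt (abs_rinner_axisDir_le_one hP hx)).injective ?_
    simp only [← norm_div_polarRadius hP hd₁, ← norm_div_polarRadius hP hd₂, h]
  rw [div_eq_div_iff hd₁.ne' hd₂.ne'] at hw
  exact (mul_left_cancel₀ (norm_ne_zero_iff.2 hP) hw).symm

section tendsto

variable {ι : Type*} {l : Filter ι} {P : ι → E3} {d : ι → ℝ} {x : ι → E3} {P₀ x₀ : E3} {d₀ : ℝ}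

lemma Filter.Tendsto.ecc (hP : Tendsto P l (𝓝 P₀)) (hd : Tendsto d l (𝓝 d₀)) (hP₀ : P₀ ≠ 0) :
    Tendsto (fun i => ecc (P i) (d i)) l (𝓝 (ecc P₀ d₀)) := by
  have hr : ‖P₀‖ ≠ 0 := norm_ne_zero_iff.2 hP₀
  exact ((tendsto_const_nhds.add ((hd.pow 2).div (hP.norm.pow 2) (pow_ne_zero 2 hr))).sqrt).sub
    (hd.div hP.norm hr)

lemma Filter.Tendsto.axisDir (hP : Tendsto P l (𝓝 P₀)) (hP₀ : P₀ ≠ 0) :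
    Tendsto (fun i => axisDir (P i)) l (𝓝 (axisDir P₀)) :=
  (hP.norm.inv₀ (norm_ne_zero_iff.2 hP₀)).smul hP

lemma Filter.Tendsto.polarRadius (hP : Tendsto P l (𝓝 P₀)) (hd : Tendsto d l (𝓝 d₀))
    (hx : Tendsto x l (𝓝 x₀)) (hP₀ : P₀ ≠ 0)
    (hden : 1 - _root_.ecc P₀ d₀ * rinner x₀ (_root_.axisDir P₀) ≠ 0) :
    Tendsto (fun i => polarRadius (P i) (d i) (x i)) l (𝓝 (polarRadius P₀ d₀ x₀)) :=
  hd.div (tendsto_const_nhds.sub ((hP.ecc hd hP₀).mul (hx.inner (hP.axisDir hP₀)))) hden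

lemma Filter.Tendsto.normalVec (hP : Tendsto P l (𝓝 P₀)) (hd : Tendsto d l (𝓝 d₀))
    (hx : Tendsto x l (𝓝 x₀)) (hP₀ : P₀ ≠ 0)
    (hv : x₀ - _root_.ecc P₀ d₀ • _root_.axisDir P₀ ≠ 0) :
    Tendsto (fun i => normalVec (P i) (d i) (x i)) l (𝓝 (normalVec P₀ d₀ x₀)) := by
  have h := hx.sub ((hP.ecc hd hP₀).smul (hP.axisDir hP₀))
  exact (h.norm.inv₀ (norm_ne_zero_iff.2 hv)).smul h

end tendsto

section supporting

variable {Ω D : Set E3} {ρ : E3 → ℝ}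

lemma IsSupportingAt.param_eq {P x : E3} {d₁ d₂ : ℝ} (h₁ : IsSupportingAt Ω ρ P d₁ x)
    (h₂ : IsSupportingAt Ω ρ P d₂ x) (hx : ‖x‖ = 1) : d₁ = d₂ :=
  eq_of_polarRadius_eq h₁.1 h₁.2.1 h₂.2.1 hx (h₁.2.2.2.symm.trans h₂.2.2.2)

lemma eq_of_notMem_ambigSet {x P₁ P₂ : E3} {d₁ d₂ : ℝ} (hS : x ∉ ambigSet Ω D ρ)
    (hx : x ∈ closure Ω) (hP₁ : P₁ ∈ D) (h₁ : IsSupportingAt Ω ρ P₁ d₁ x) (hP₂ : P₂ ∈ D)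
    (h₂ : IsSupportingAt Ω ρ P₂ d₂ x) : P₁ = P₂ := by
  by_contra hne
  exact hS ⟨hx, P₁, hP₁, P₂, hP₂, hne, ⟨hx, P₁, rfl, d₁, h₁⟩, ⟨hx, P₂, rfl, d₂, h₂⟩⟩

lemma IsSupportingAt.param_le (hΩ : Ω ⊆ sphere2) {P x P₀ x₀ : E3} {d d₀ : ℝ}
    (h : IsSupportingAt Ω ρ P d x) (hx : x ∈ closure Ω) (h₀ : IsSupportingAt Ω ρ P₀ d₀ x₀) :
    d ≤ 2 * (d₀ / (1 - ecc P₀ d₀)) := by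
  have hx₁ := norm_eq_one_of_mem_closure hΩ hx
  calc d ≤ 2 * polarRadius P d x := by linarith [div_two_le_polarRadius h.1 h.2.1 hx₁]
    _ = 2 * ρ x := by rw [h.2.2.2]
    _ ≤ 2 * polarRadius P₀ d₀ x := by gcongr; exact h₀.2.2.1 x hx
    _ ≤ 2 * (d₀ / (1 - ecc P₀ d₀)) := by gcongr; exact polarRadius_le h₀.1 h₀.2.1 hx₁

variable {ι : Type*} {l : Filter ι} [l.NeBot] {P : ι → E3} {d : ι → ℝ} {x : ι → E3}
  {P' x₀ P₀ : E3} {d' d₀ : ℝ}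

/-- Ellipsoids with fixed focus `O`, second focus near `P' ≠ 0` and `d → 0` collapse onto the
ray through `P'`: their radius tends to `0` in every other direction. -/
lemma eq_axisDir_of_tendsto_zero (hΩ : Ω ⊆ sphere2) (hρ : ∀ y ∈ closure Ω, 0 < ρ y)
    (hle : ∀ i, ∀ y ∈ closure Ω, ρ y ≤ polarRadius (P i) (d i) y)
    (hP : Tendsto P l (𝓝 P')) (hd : Tendsto d l (𝓝 0)) (hP' : P' ≠ 0) :
    ∀ y ∈ closure Ω, y = axisDir P' := by
  intro y hy
  by_contra hne
  have hden : 1 - ecc P' 0 * rinner y (axisDir P') ≠ 0 := by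
    rw [ecc_zero, one_mul, sub_ne_zero, ne_comm, rinner, Ne,
      inner_eq_one_iff_of_norm_eq_one (norm_eq_one_of_mem_closure hΩ hy) (norm_axisDir hP')]
    exact hne
  have hlim := hP.polarRadius hd tendsto_const_nhds hP' hden
  rw [polarRadius, zero_div] at hlim
  exact (hρ y hy).not_ge (ge_of_tendsto' hlim fun i => hle i y hy)

lemma IsSupportingAt.of_tendsto (hΩ : Ω ⊆ sphere2)
    (hsupp : ∀ i, IsSupportingAt Ω ρ (P i) (d i) (x i)) (hxΩ : ∀ i, x i ∈ closure Ω)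
    (hP : Tendsto P l (𝓝 P')) (hd : Tendsto d l (𝓝 d')) (hx : Tendsto x l (𝓝 x₀))
    (hP' : P' ≠ 0) (hd' : 0 < d') (h₀ : IsSupportingAt Ω ρ P₀ d₀ x₀) (hx₀ : x₀ ∈ closure Ω) :
    IsSupportingAt Ω ρ P' d' x₀ := by
  have hden : ∀ {P d y}, P ≠ 0 → 0 < d → ‖y‖ = 1 → 1 - ecc P d * rinner y (axisDir P) ≠ 0 :=
    fun hP hd hy => (one_sub_ecc_mul_rinner_pos hP hd hy).ne'
  have hx₀₁ := norm_eq_one_of_mem_closure hΩ hx₀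
  refine ⟨hP', hd', fun y hy => ?_, le_antisymm ?_ ?_⟩
  · exact ge_of_tendsto' (hP.polarRadius hd tendsto_const_nhds hP'
      (hden hP' hd' (norm_eq_one_of_mem_closure hΩ hy))) fun i => (hsupp i).2.2.1 y hy
  · exact ge_of_tendsto' (hP.polarRadius hd tendsto_const_nhds hP' (hden hP' hd' hx₀₁))
      fun i => (hsupp i).2.2.1 x₀ hx₀
  -- `ρ` is upper semicontinuous at `x₀`, being touched from above by the ellipsoid `E_{d₀}(P₀)`
  · rw [h₀.2.2.2]
    refine le_of_tendsto_of_tendsto' (hP.polarRadius hd hx hP' (hden hP' hd' hx₀₁))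
      (tendsto_const_nhds.polarRadius tendsto_const_nhds hx h₀.1 (hden h₀.1 h₀.2.1 hx₀₁))
      fun i => ?_
    rw [← (hsupp i).2.2.2]
    exact h₀.2.2.1 _ (hxΩ i)

lemma eq_of_tendsto_isSupportingAt (hΩ : Ω ⊆ sphere2) (hρ : ∀ y ∈ closure Ω, 0 < ρ y)
    (hO : (0 : E3) ∉ D) (hsupp : ∀ i, P i ∈ D ∧ IsSupportingAt Ω ρ (P i) (d i) (x i))
    (hxΩ : ∀ i, x i ∈ closure Ω) (hx : Tendsto x l (𝓝 x₀)) (hx₀ : x₀ ∈ closure Ω)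
    (hx₀S : x₀ ∉ ambigSet Ω D ρ) (h₀ : P₀ ∈ D ∧ IsSupportingAt Ω ρ P₀ d₀ x₀)
    (hP : Tendsto P l (𝓝 P')) (hP'D : P' ∈ D) (hd : Tendsto d l (𝓝 d')) :
    P' = P₀ ∧ d' = d₀ := by
  have hP' : P' ≠ 0 := fun h => hO (h ▸ hP'D)
  have hx₀₁ := norm_eq_one_of_mem_closure hΩ hx₀
  have hd' : 0 < d' := by
    refine (ge_of_tendsto' hd fun i => (hsupp i).2.2.1.le).lt_of_ne' fun hd'0 => ?_
    -- otherwise `closure Ω` is the single direction `x₀`, where the support is unique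
    have hcoll := eq_axisDir_of_tendsto_zero hΩ hρ (fun i => (hsupp i).2.2.2.1) hP
      (hd'0 ▸ hd) hP'
    have hxi : ∀ i, x i = x₀ := fun i =>
      (hcoll _ (hxΩ i)).trans (hcoll _ hx₀).symm
    have hdi : ∀ i, d i = d₀ := fun i => by
      obtain ⟨hPi, hi⟩ := hsupp i
      rw [hxi i] at hi
      cases eq_of_notMem_ambigSet hx₀S hx₀ hPi hi h₀.1 h₀.2
      exact hi.param_eq h₀.2 hx₀₁
    have : d₀ = d' := tendsto_nhds_unique (tendsto_const_nhds.congr fun i => (hdi i).symm) hd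
    exact h₀.2.2.1.ne' (this.trans hd'0)
  have hsupp' := IsSupportingAt.of_tendsto hΩ (fun i => (hsupp i).2) hxΩ hP hd hx hP' hd' h₀.2 hx₀
  obtain rfl := eq_of_notMem_ambigSet hx₀S hx₀ hP'D hsupp' h₀.1 h₀.2
  exact ⟨rfl, hsupp'.param_eq h₀.2 hx₀₁⟩

end supporting

theorem supporting_ellipsoids_converge_general
    (Ω : Set E3) (hΩ : Ω ⊆ sphere2)
    (D : Set E3) (hD : IsCompact D) (hO : (0 : E3) ∉ D)
    (M : ℝ)
    (δ : ℝ)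
    (ρ : E3 → ℝ) (hσ : InClassA Ω D ρ δ M)
    (x : ℕ → E3) (x₀ : E3)
    (hx : ∀ n, x n ∈ closure Ω) (hx₀ : x₀ ∈ closure Ω)
    (hx₀S : x₀ ∉ ambigSet Ω D ρ)
    (hconv : Filter.Tendsto x Filter.atTop (nhds x₀))
    (P : ℕ → E3) (d : ℕ → ℝ) (P₀ : E3) (d₀ : ℝ)
    (hPn : ∀ n, P n ∈ D ∧ IsSupportingAt Ω ρ (P n) (d n) (x n))
    (hP₀ : P₀ ∈ D ∧ IsSupportingAt Ω ρ P₀ d₀ x₀) :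
    Filter.Tendsto d Filter.atTop (nhds d₀) ∧
    Filter.Tendsto P Filter.atTop (nhds P₀) ∧
    Filter.Tendsto (fun n => normalVec (P n) (d n) (x n)) Filter.atTop
      (nhds (normalVec P₀ d₀ x₀)) := by
  have hbound : ∀ n, (P n, d n) ∈ D ×ˢ Icc 0 (2 * (d₀ / (1 - ecc P₀ d₀))) := fun n =>
    ⟨(hPn n).1, (hPn n).2.2.1.le, (hPn n).2.param_le hΩ (hx n) hP₀.2⟩
  have hPd : Tendsto (fun n => (P n, d n)) atTop (𝓝 (P₀, d₀)) := by
    refine (hD.prod isCompact_Icc).tendsto_nhds_of_unique_mapClusterPt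
      (Eventually.of_forall hbound) ?_
    rintro ⟨P', d'⟩ ⟨hP'D, -⟩ hclust
    obtain ⟨U, hU, hlim⟩ := mapClusterPt_iff_ultrafilter.1 hclust
    obtain ⟨rfl, rfl⟩ := eq_of_tendsto_isSupportingAt hΩ hσ.1.1 hO (fun n => hPn n) hx
      (hconv.mono_left hU) hx₀ hx₀S hP₀ hlim.fst_nhds hP'D hlim.snd_nhds
    rfl
  have hP := hPd.fst_nhds
  have hd := hPd.snd_nhds
  exact ⟨hd, hP, hP.normalVec hd hconv hP₀.2.1 <| sub_ecc_smul_axisDir_ne_zero hP₀.2.1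
    hP₀.2.2.1 (norm_eq_one_of_mem_closure hΩ hx₀)⟩

/-- Continuity of supporting ellipsoids outside the ambiguous set: if
`x_n → x₀` in `closure Ω \ S` and `E_{d_n}(P_n)`, `E_{d₀}(P₀)` are supporting
ellipsoids at `ρ(x_n)x_n`, `ρ(x₀)x₀`, then `d_n → d₀`, `P_n → P₀` and the
corresponding normals converge. -/
theorem supporting_ellipsoids_converge
    (Ω : Set E3) (hΩ : Ω ⊆ sphere2) (hfr : μH[2] (sphFrontier Ω) = 0)
    (D : Set E3) (hD : IsCompact D) (hO : (0 : E3) ∉ D)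
    (hDpc : InPlane D ∨ D.Countable)
    (M : ℝ) (hM : IsGreatest ((fun p : E3 => ‖p‖) '' D) M)
    (δ : ℝ) (hδ : 0 < δ)
    (ρ : E3 → ℝ) (hσ : InClassA Ω D ρ δ M)
    (x : ℕ → E3) (x₀ : E3)
    (hx : ∀ n, x n ∈ closure Ω) (hx₀ : x₀ ∈ closure Ω)
    (hxS : ∀ n, x n ∉ ambigSet Ω D ρ) (hx₀S : x₀ ∉ ambigSet Ω D ρ)
    (hconv : Filter.Tendsto x Filter.atTop (nhds x₀))
    (P : ℕ → E3) (d : ℕ → ℝ) (P₀ : E3) (d₀ : ℝ)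
    (hPn : ∀ n, P n ∈ D ∧ IsSupportingAt Ω ρ (P n) (d n) (x n))
    (hP₀ : P₀ ∈ D ∧ IsSupportingAt Ω ρ P₀ d₀ x₀) :
    Filter.Tendsto d Filter.atTop (nhds d₀) ∧
    Filter.Tendsto P Filter.atTop (nhds P₀) ∧
    Filter.Tendsto (fun n => normalVec (P n) (d n) (x n)) Filter.atTop
      (nhds (normalVec P₀ d₀ x₀)) :=
  supporting_ellipsoids_converge_general Ω hΩ D hD hO M δ ρ hσ x x₀ hx hx₀ hx₀S hconv P d P₀ d₀ hPn
    hP₀
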